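/- For positive integers n, l and parameters x, z, q with denominators nonzero: ∑_{i=1}^n [(1 - x^i) (z^{-1}q;q)_{i-1} z^{i-1} / (q;q)_i] · h_{l-1}(1/(z-q^i), ..., 1/(z-q^n)) = [z^n (z^{-1}q;q)_n/(q;q)_n] · ∑_{i=1}^n [n choose i]_q (-1)^{i-1} q^{binom(i+1,2) - ni} (x;q)_i / (z - q^i)^l. -/

import Mathlib

/-
Put `y_k = 1 / (z - q^k)` and let `L_{i,j}` be the Lagrange basis polynomial of the nodes
`q^i, …, q^n` at `q^j`. From `∑_j L_{i,j} = 1` and the recursion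
`h_{m+1}(y_i, …, y_n) = y_i h_m(y_i, …, y_n) + h_{m+1}(y_{i+1}, …, y_n)` one gets the partial
fraction expansion `h_m(y_i, …, y_n) = ∑_{j ≥ i} y_j^m L_{i,j}(z)`. After exchanging the two sums,
the coefficient of `y_j^{l-1}` is `∑_{i ≤ j} c_i L_{i,j}(z)`, where `c_i` is the factor in front of
`h_{l-1}` in the `i`-th summand. Since
`L_{1,j} = L_{i,j} ∏_{k<i} (z - q^k)/(q^j - q^k)` and `(z⁻¹q;q)_{i-1} z^{i-1} = ∏_{k<i} (z - q^k)`,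
this coefficient is `L_{1,j}(z)/(1 - q^j)` times
`∑_{i=1}^j (1 - x^i) (-1)^{i-1} q^{binom(i,2)} [j choose i]_q`, which is `(x;q)_j` by the
q-binomial theorem. Evaluating `L_{1,j}(z)` with
`∏_{k ≠ j} (q^j - q^k) = (-1)^{j-1} q^{binom(j,2) + j(n-j)} (q;q)_{j-1} (q;q)_{n-j}` gives the
right-hand side.
-/

noncomputable def qPoch (q a : ℝ) (n : ℕ) : ℝ := ∏ j ∈ Finset.range n, (1 - a * q ^ j)

noncomputable def qBinom (q : ℝ) (n r : ℕ) : ℝ :=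
  if r ≤ n then qPoch q q n / (qPoch q q r * qPoch q q (n - r)) else 0

/-- Complete homogeneous symmetric polynomial `h_k` of the entries of a list. -/
noncomputable def hPoly : List ℝ → ℕ → ℝ
  | _, 0 => 1
  | [], _ + 1 => 0
  | a :: as, k + 1 => a * hPoly (a :: as) k + hPoly as (k + 1)
termination_by l k => (l.length, k)

/-- The list `[f i, f (i+1), …, f n]`. -/
def varList (f : ℕ → ℝ) (i n : ℕ) : List ℝ := (List.range (n + 1 - i)).map fun j => f (i + j)

open Finset Polynomial

namespace Lagrange

variable {F ι : Type*} [Field F] [DecidableEq ι] {s t : Finset ι} {v : ι → F} {i j : ι} {x : F}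

theorem eval_basis (s : Finset ι) (v : ι → F) (i : ι) (x : F) :
    (Lagrange.basis s v i).eval x = ∏ k ∈ s.erase i, (x - v k) / (v i - v k) := by
  rw [Lagrange.basis, eval_prod]
  refine prod_congr rfl fun k _ => ?_
  rw [basisDivisor, eval_mul, eval_C, eval_sub, eval_X, eval_C, inv_mul_eq_div]

theorem eval_basis_insert (hi : i ∉ s) (hj : j ∈ s) :
    (Lagrange.basis (insert i s) v j).eval x
      = (x - v i) / (v j - v i) * (Lagrange.basis s v j).eval x := by
  rw [eval_basis, eval_basis, erase_insert_of_ne (by rintro rfl; exact hi hj),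
    prod_insert (fun h => hi (mem_of_mem_erase h))]

theorem eval_basis_union_mul_prod (hst : Disjoint t s) (hj : j ∈ s)
    (hv : ∀ k ∈ t, v j ≠ v k) :
    (Lagrange.basis (t ∪ s) v j).eval x * ∏ k ∈ t, (v j - v k)
      = (∏ k ∈ t, (x - v k)) * (Lagrange.basis s v j).eval x := by
  have hjt : j ∉ t := disjoint_right.mp hst hj
  have hne : ∏ k ∈ t, (v j - v k) ≠ 0 := prod_ne_zero_iff.mpr fun k hk => sub_ne_zero.mpr (hv k hk)
  rw [eval_basis, eval_basis, erase_union_distrib, erase_eq_of_notMem hjt,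
    prod_union (hst.mono_right (erase_subset j s)), prod_div_distrib, div_mul_eq_mul_div,
    div_mul_cancel₀ _ hne]

theorem sum_eval_basis (hvs : Set.InjOn v s) (hs : s.Nonempty) :
    ∑ j ∈ s, (Lagrange.basis s v j).eval x = 1 := by
  rw [← eval_finsetSum, sum_basis hvs hs, eval_one]

theorem sum_one_div_pow_succ_mul_eval_basis_insert (hi : i ∉ s) (hv : ∀ j ∈ s, v j ≠ v i)
    (hx : ∀ j ∈ insert i s, x ≠ v j) (m : ℕ) :
    ∑ j ∈ insert i s, (1 / (x - v j)) ^ (m + 1) * (Lagrange.basis (insert i s) v j).eval x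
      = 1 / (x - v i) * ∑ j ∈ insert i s,
          (1 / (x - v j)) ^ m * (Lagrange.basis (insert i s) v j).eval x
        + ∑ j ∈ s, (1 / (x - v j)) ^ (m + 1) * (Lagrange.basis s v j).eval x := by
  have hxi : x - v i ≠ 0 := sub_ne_zero.mpr (hx i (mem_insert_self i s))
  have key : ∀ j ∈ s, (1 / (x - v j)) ^ (m + 1) * (Lagrange.basis (insert i s) v j).eval x
      = 1 / (x - v i) * ((1 / (x - v j)) ^ m * (Lagrange.basis (insert i s) v j).eval x)
        + (1 / (x - v j)) ^ (m + 1) * (Lagrange.basis s v j).eval x := by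
    intro j hj
    have hxj : x - v j ≠ 0 := sub_ne_zero.mpr (hx j (mem_insert_of_mem hj))
    have hji : v j - v i ≠ 0 := sub_ne_zero.mpr (hv j hj)
    have h : 1 / (x - v j) * ((x - v i) / (v j - v i))
        = 1 / (x - v i) * ((x - v i) / (v j - v i)) + 1 / (x - v j) := by
      field_simp
      ring
    rw [eval_basis_insert hi hj, pow_succ]
    linear_combination (1 / (x - v j)) ^ m * (Lagrange.basis s v j).eval x * h
  rw [sum_insert hi, sum_insert hi, sum_congr rfl key, sum_add_distrib, mul_add, mul_sum,
    pow_succ']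
  ring

end Lagrange

theorem hPoly_zero (L : List ℝ) : hPoly L 0 = 1 := by
  cases L <;> simp [hPoly]

theorem hPoly_cons_succ (a : ℝ) (L : List ℝ) (k : ℕ) :
    hPoly (a :: L) (k + 1) = a * hPoly (a :: L) k + hPoly L (k + 1) := by
  simp [hPoly]

theorem hPoly_singleton (a : ℝ) (k : ℕ) : hPoly [a] k = a ^ k := by
  induction k with
  | zero => exact hPoly_zero _
  | succ k ih =>
    rw [hPoly_cons_succ, ih, pow_succ']
    simp [hPoly]

theorem varList_self (f : ℕ → ℝ) (n : ℕ) : varList f n n = [f n] := by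
  simp [varList]

theorem varList_of_lt (f : ℕ → ℝ) {i n : ℕ} (h : i < n) :
    varList f i n = f i :: varList f (i + 1) n := by
  rw [varList, varList, show n + 1 - i = n + 1 - (i + 1) + 1 by omega, List.range_succ_eq_map]
  simp [Function.comp_def, add_assoc, add_comm 1]

theorem hPoly_varList_eq_sum_eval_basis {v : ℕ → ℝ} {x : ℝ} {i n : ℕ} (hin : i ≤ n)
    (hv : Set.InjOn v (Icc i n)) (hx : ∀ k ∈ Icc i n, x ≠ v k) (m : ℕ) :
    hPoly (varList (fun k => 1 / (x - v k)) i n) m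
      = ∑ j ∈ Icc i n, (1 / (x - v j)) ^ m * (Lagrange.basis (Icc i n) v j).eval x := by
  induction m generalizing i with
  | zero =>
    simp only [hPoly_zero, pow_zero, one_mul]
    exact (Lagrange.sum_eval_basis hv (nonempty_Icc.mpr hin)).symm
  | succ m ihm =>
    induction hin using Nat.decreasingInduction with
    | self =>
      simp [varList_self, hPoly_singleton, Lagrange.basis_singleton]
    | of_succ i hin ihi =>
      have hIcc := insert_Icc_add_one_left_eq_Icc hin.le
      have hsub : Icc (i + 1) n ⊆ Icc i n := hIcc ▸ subset_insert _ _
      rw [varList_of_lt _ hin, hPoly_cons_succ, ← varList_of_lt (fun k => 1 / (x - v k)) hin,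
        ihm hin.le hv hx, ihi (hv.mono hsub) (fun k hk => hx k (hsub hk)), ← hIcc,
        Lagrange.sum_one_div_pow_succ_mul_eval_basis_insert (by simp)
          (fun j hj => hv.ne (hsub hj) (left_mem_Icc.mpr hin.le) (by grind)) (hIcc ▸ hx)]

theorem pow_injective_of_abs_ne_one {q : ℝ} (hq0 : q ≠ 0) (hq1 : |q| ≠ 1) :
    Function.Injective (q ^ · : ℕ → ℝ) :=
  fun a b hab => pow_right_injective₀ (abs_pos.mpr hq0) hq1 (by simp only [← abs_pow, hab])

theorem qPoch_zero (q a : ℝ) : qPoch q a 0 = 1 := prod_range_zero _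

theorem qPoch_succ (q a : ℝ) (m : ℕ) : qPoch q a (m + 1) = qPoch q a m * (1 - a * q ^ m) :=
  prod_range_succ _ _

theorem qPoch_one_of_pos (q : ℝ) {m : ℕ} (hm : 0 < m) : qPoch q 1 m = 0 :=
  prod_eq_zero (mem_range.mpr hm) (by simp)

theorem qPoch_self_eq_prod_Icc (q : ℝ) (m : ℕ) : qPoch q q m = ∏ k ∈ Icc 1 m, (1 - q ^ k) := by
  induction m with
  | zero => simp [qPoch_zero]
  | succ m ih => rw [qPoch_succ, prod_Icc_succ_top (by omega), ih, pow_succ']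

theorem qPoch_inv_mul_mul_pow (q : ℝ) {z : ℝ} (hz : z ≠ 0) (m : ℕ) :
    qPoch q (z⁻¹ * q) m * z ^ m = ∏ k ∈ Icc 1 m, (z - q ^ k) := by
  induction m with
  | zero => simp [qPoch_zero]
  | succ m ih =>
    rw [qPoch_succ, prod_Icc_succ_top (by omega), ← ih]
    field_simp
    ring

theorem qBinom_of_lt (q : ℝ) {n r : ℕ} (h : n < r) : qBinom q n r = 0 := by
  simp [qBinom, h.not_ge]

theorem prod_Icc_pow_sub_pow_mul_qPoch (q : ℝ) (m r : ℕ) :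
    (∏ k ∈ Icc 1 m, (q ^ (m + 1 + r) - q ^ k)) * qPoch q q r
      = (-1) ^ m * q ^ (m + 1).choose 2 * qPoch q q (m + r) := by
  induction m generalizing r with
  | zero => simp
  | succ m ih =>
    have ih' := ih (r + 1)
    rw [qPoch_succ, show m + 1 + (r + 1) = m + 1 + 1 + r by ring,
      show m + (r + 1) = m + 1 + r by ring] at ih'
    rw [prod_Icc_succ_top (by omega), Nat.choose_succ_succ' (m + 1), Nat.choose_one_right]
    linear_combination (-q ^ (m + 1)) * ih'

theorem prod_Icc_add_pow_sub_pow (q : ℝ) (j r : ℕ) :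
    ∏ k ∈ Icc (j + 1) (j + r), (q ^ j - q ^ k) = q ^ (j * r) * qPoch q q r := by
  induction r with
  | zero => simp [qPoch_zero]
  | succ r ih =>
    rw [← add_assoc, prod_Icc_succ_top (by omega), ih, qPoch_succ]
    ring

theorem prod_erase_pow_sub_pow_mul (q : ℝ) {j n : ℕ} (hj : 1 ≤ j) (hjn : j ≤ n) :
    (∏ k ∈ (Icc 1 n).erase j, (q ^ j - q ^ k)) * (1 - q ^ j)
      = (-1) ^ (j - 1) * q ^ (j.choose 2 + j * (n - j)) * (qPoch q q j * qPoch q q (n - j)) := by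
  obtain ⟨m, rfl⟩ := Nat.exists_eq_add_of_le' hj
  obtain ⟨r, rfl⟩ := Nat.exists_eq_add_of_le hjn
  have hsplit : (Icc 1 (m + 1 + r)).erase (m + 1) = Icc 1 m ∪ Icc (m + 1 + 1) (m + 1 + r) := by
    ext k
    simp only [mem_erase, mem_Icc, mem_union]
    omega
  have hbelow := prod_Icc_pow_sub_pow_mul_qPoch q m 0
  simp only [add_zero, qPoch_zero, mul_one] at hbelow
  rw [hsplit,
    prod_union (disjoint_left.mpr fun k hk hk' => by simp only [mem_Icc] at hk hk'; omega),
    hbelow, prod_Icc_add_pow_sub_pow, Nat.add_sub_cancel, Nat.add_sub_cancel_left, qPoch_succ,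
    pow_add]
  ring

theorem pow_choose_two_add_mul_zpow {q : ℝ} (hq0 : q ≠ 0) {j n : ℕ} (hjn : j ≤ n) :
    q ^ (j.choose 2 + j * (n - j)) * q ^ (((j * (j + 1) / 2 : ℕ) : ℤ) - n * j) = 1 := by
  have htri : j * (j + 1) / 2 = (j + 1).choose 2 := by
    rw [Nat.choose_two_right, Nat.add_sub_cancel, mul_comm]
  have hexp : ((j.choose 2 + j * (n - j) : ℕ) : ℚ) + ((j + 1).choose 2 : ℕ) - n * j = 0 := by
    push_cast [Nat.cast_sub hjn, Nat.cast_choose_two]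
    ring
  rw [← zpow_natCast, ← zpow_add₀ hq0, htri, add_sub_assoc', ← zpow_zero q]
  congr 1
  exact_mod_cast hexp

section NotRootOfUnity

variable {q : ℝ} (hq : ∀ j : ℕ, 1 ≤ j → 1 - q ^ j ≠ 0)
include hq

theorem abs_ne_one_of_one_sub_pow_ne_zero : |q| ≠ 1 := by
  intro h
  apply hq 2 (by norm_num)
  rw [← sq_abs, h]
  norm_num

theorem qPoch_self_ne_zero (m : ℕ) : qPoch q q m ≠ 0 := by
  rw [qPoch_self_eq_prod_Icc]
  exact prod_ne_zero_iff.mpr fun k hk => hq k (mem_Icc.mp hk).1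

theorem qBinom_mul_qPoch_mul_qPoch {n r : ℕ} (h : r ≤ n) :
    qBinom q n r * (qPoch q q r * qPoch q q (n - r)) = qPoch q q n := by
  rw [qBinom, if_pos h, div_mul_cancel₀]
  exact mul_ne_zero (qPoch_self_ne_zero hq r) (qPoch_self_ne_zero hq (n - r))

theorem qBinom_zero_right (n : ℕ) : qBinom q n 0 = 1 := by
  simpa [qPoch_zero, qPoch_self_ne_zero hq n] using qBinom_mul_qPoch_mul_qPoch hq (Nat.zero_le n)

theorem qBinom_self (n : ℕ) : qBinom q n n = 1 := by
  have h := qBinom_mul_qPoch_mul_qPoch hq (le_refl n)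
  rwa [Nat.sub_self, qPoch_zero, mul_one, mul_eq_right₀ (qPoch_self_ne_zero hq n)] at h

theorem qBinom_succ_succ {n r : ℕ} (h : r ≤ n) :
    qBinom q (n + 1) (r + 1) = qBinom q n (r + 1) + q ^ (n - r) * qBinom q n r := by
  obtain ⟨t, rfl⟩ := Nat.exists_eq_add_of_le h
  rcases t with _ | t
  · simp [qBinom_self hq, qBinom_of_lt q (Nat.lt_succ_self r)]
  · have h1 : 1 - q * q ^ t ≠ 0 := by rw [← pow_succ']; exact hq (t + 1) (by omega)
    have h2 : 1 - q * q ^ r ≠ 0 := by rw [← pow_succ']; exact hq (r + 1) (by omega)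
    have h3 := qPoch_self_ne_zero hq r
    have h4 := qPoch_self_ne_zero hq t
    simp only [qBinom, if_pos (by omega : r + 1 ≤ r + (t + 1) + 1),
      if_pos (by omega : r + 1 ≤ r + (t + 1)),
      if_pos (by omega : r ≤ r + (t + 1)), show r + (t + 1) + 1 - (r + 1) = t + 1 by omega,
      show r + (t + 1) - (r + 1) = t by omega, show r + (t + 1) - r = t + 1 by omega]
    rw [qPoch_succ q q (r + (t + 1)), qPoch_succ q q r, qPoch_succ q q t]
    field_simp
    ring

theorem sum_range_qBinom_mul_pow (x : ℝ) (n : ℕ) :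
    ∑ i ∈ range (n + 1), (-1) ^ i * q ^ i.choose 2 * qBinom q n i * x ^ i = qPoch q x n := by
  induction n with
  | zero => simp [qBinom_zero_right hq, qPoch_zero]
  | succ n ih =>
    set T : ℕ → ℝ := fun i => (-1) ^ i * q ^ i.choose 2 * qBinom q n i * x ^ i with hT
    have hshift : ∑ t ∈ range (n + 1), T (t + 1) = qPoch q x n - 1 := by
      have h := sum_range_succ' T (n + 1)
      rw [sum_range_succ, ih] at h
      simp only [hT, qBinom_of_lt q (Nat.lt_succ_self n), qBinom_zero_right hq, mul_zero,
        zero_mul, add_zero, pow_zero, Nat.choose_zero_succ, mul_one] at h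
      linarith
    have hpascal : ∀ t ∈ range (n + 1),
        (-1) ^ (t + 1) * q ^ (t + 1).choose 2 * qBinom q (n + 1) (t + 1) * x ^ (t + 1)
          = T (t + 1) + -(x * q ^ n) * T t := by
      intro t ht
      obtain ⟨s, rfl⟩ := Nat.exists_eq_add_of_le (Nat.lt_succ_iff.mp (mem_range.mp ht))
      rw [qBinom_succ_succ hq (Nat.le_add_right t s), hT]
      dsimp only
      rw [Nat.choose_succ_succ', Nat.choose_one_right, Nat.add_sub_cancel_left]
      ring
    rw [sum_range_succ', sum_congr rfl hpascal, sum_add_distrib, ← mul_sum, hshift, ih,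
      qPoch_succ, qBinom_zero_right hq]
    simp only [pow_zero, Nat.choose_zero_succ, mul_one]
    ring

theorem sum_Icc_one_sub_pow_mul_qBinom (x : ℝ) {n : ℕ} (hn : 0 < n) :
    ∑ i ∈ Icc 1 n, (1 - x ^ i) * ((-1) ^ (i - 1) * q ^ i.choose 2 * qBinom q n i)
      = qPoch q x n := by
  calc _ = ∑ i ∈ range (n + 1), ((-1) ^ i * q ^ i.choose 2 * qBinom q n i * x ^ i
          - (-1) ^ i * q ^ i.choose 2 * qBinom q n i * 1 ^ i) := by
        rw [Nat.range_succ_eq_Icc_zero, ← insert_Icc_add_one_left_eq_Icc (Nat.zero_le n),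
          sum_insert (by simp), zero_add]
        simp only [pow_zero, sub_self, zero_add]
        refine sum_congr rfl fun i hi => ?_
        obtain ⟨k, rfl⟩ := Nat.exists_eq_add_of_le' (mem_Icc.mp hi).1
        rw [Nat.add_sub_cancel, one_pow, pow_succ]
        ring
    _ = qPoch q x n := by
        rw [sum_sub_distrib, sum_range_qBinom_mul_pow hq, sum_range_qBinom_mul_pow hq,
          qPoch_one_of_pos q hn, sub_zero]

end NotRootOfUnity

section QNodes

variable {q z : ℝ} (hq0 : q ≠ 0) (hq : ∀ j : ℕ, 1 ≤ j → 1 - q ^ j ≠ 0)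
include hq0 hq

theorem sum_Icc_mul_eval_basis (x : ℝ) (hz : z ≠ 0) {j n : ℕ} (hj : 1 ≤ j) (hjn : j ≤ n) :
    ∑ i ∈ Icc 1 j, (1 - x ^ i) * qPoch q (z⁻¹ * q) (i - 1) * z ^ (i - 1) / qPoch q q i *
        (Lagrange.basis (Icc i n) (q ^ ·) j).eval z
      = (Lagrange.basis (Icc 1 n) (q ^ ·) j).eval z * qPoch q x j / (1 - q ^ j) := by
  have hinj := pow_injective_of_abs_ne_one hq0 (abs_ne_one_of_one_sub_pow_ne_zero hq)
  have hterm : ∀ i ∈ Icc 1 j,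
      (1 - x ^ i) * qPoch q (z⁻¹ * q) (i - 1) * z ^ (i - 1) / qPoch q q i *
          (Lagrange.basis (Icc i n) (q ^ ·) j).eval z
        = (Lagrange.basis (Icc 1 n) (q ^ ·) j).eval z *
            ((1 - x ^ i) * ((-1) ^ (i - 1) * q ^ i.choose 2 * qBinom q j i)) / (1 - q ^ j) := by
    intro i hi
    obtain ⟨m, rfl⟩ := Nat.exists_eq_add_of_le' (mem_Icc.mp hi).1
    obtain ⟨r, rfl⟩ := Nat.exists_eq_add_of_le (mem_Icc.mp hi).2
    have hsplit : Icc 1 n = Icc 1 m ∪ Icc (m + 1) n := by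
      ext k
      simp only [mem_Icc, mem_union]
      omega
    have hweight := Lagrange.eval_basis_union_mul_prod (x := z)
      (disjoint_left.mpr fun k hk hk' => by simp only [mem_Icc] at hk hk'; omega)
      (mem_Icc.mpr ⟨Nat.le_add_right _ _, hjn⟩)
      (fun k hk => hinj.ne (by simp only [mem_Icc] at hk; omega) :
        ∀ k ∈ Icc 1 m, q ^ (m + 1 + r) ≠ q ^ k)
    rw [← hsplit] at hweight
    have hbelow := prod_Icc_pow_sub_pow_mul_qPoch q m r
    have hbinom := qBinom_mul_qPoch_mul_qPoch hq (Nat.le_add_right (m + 1) r)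
    rw [Nat.add_sub_cancel_left] at hbinom
    have hQ : qPoch q q (m + 1 + r) = qPoch q q (m + r) * (1 - q ^ (m + 1 + r)) := by
      rw [show m + 1 + r = m + r + 1 by ring, qPoch_succ]
      ring
    set D := ∏ k ∈ Icc 1 m, (q ^ (m + 1 + r) - q ^ k)
    set w₁ := (Lagrange.basis (Icc 1 n) (q ^ ·) (m + 1 + r)).eval z
    have hQr := qPoch_self_ne_zero hq r
    have hQi := qPoch_self_ne_zero hq (m + 1)
    have hqj := hq (m + 1 + r) (by omega)
    have key : D * (1 - q ^ (m + 1 + r)) = (-1) ^ m * q ^ (m + 1).choose 2 *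
        qBinom q (m + 1 + r) (m + 1) * qPoch q q (m + 1) := by
      refine mul_right_cancel₀ hQr ?_
      linear_combination (1 - q ^ (m + 1 + r)) * hbelow
        - (-1) ^ m * q ^ (m + 1).choose 2 * (hbinom.trans hQ)
    rw [Nat.add_sub_cancel, mul_assoc (1 - x ^ (m + 1)), qPoch_inv_mul_mul_pow q hz m]
    field_simp
    linear_combination (-(1 - x ^ (m + 1)) * (1 - q ^ (m + 1 + r))) * hweight
      + (1 - x ^ (m + 1)) * w₁ * key
  rw [sum_congr rfl hterm, ← sum_div, ← mul_sum, sum_Icc_one_sub_pow_mul_qBinom hq x hj,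
    mul_div_assoc]

theorem sub_pow_mul_eval_basis_div (hz : z ≠ 0) {j n : ℕ} (hj : 1 ≤ j) (hjn : j ≤ n) :
    (z - q ^ j) * (Lagrange.basis (Icc 1 n) (q ^ ·) j).eval z / (1 - q ^ j)
      = z ^ n * qPoch q (z⁻¹ * q) n / qPoch q q n *
          (qBinom q n j * (-1) ^ (j - 1) * q ^ (((j * (j + 1) / 2 : ℕ) : ℤ) - (n : ℤ) * j)) := by
  have hinj := pow_injective_of_abs_ne_one hq0 (abs_ne_one_of_one_sub_pow_ne_zero hq)
  have hmem : j ∈ Icc 1 n := mem_Icc.mpr ⟨hj, hjn⟩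
  have hE : ∏ k ∈ (Icc 1 n).erase j, (q ^ j - q ^ k) ≠ 0 :=
    prod_ne_zero_iff.mpr fun k hk => sub_ne_zero.mpr (hinj.ne (ne_of_mem_erase hk).symm)
  have hQn := qPoch_self_ne_zero hq n
  have hqj := hq j hj
  have hnode := prod_erase_pow_sub_pow_mul q hj hjn
  have hbinom := qBinom_mul_qPoch_mul_qPoch hq hjn
  have hexp := pow_choose_two_add_mul_zpow hq0 hjn
  have hsign : ((-1 : ℝ) ^ (j - 1)) * (-1) ^ (j - 1) = 1 := by
    rw [← mul_pow]
    norm_num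
  rw [Lagrange.eval_basis, prod_div_distrib, mul_comm (z ^ n), qPoch_inv_mul_mul_pow q hz,
    ← mul_prod_erase _ _ hmem]
  set e := q ^ (((j * (j + 1) / 2 : ℕ) : ℤ) - (n : ℤ) * j)
  set N := ∏ k ∈ (Icc 1 n).erase j, (z - q ^ k)
  set B := qBinom q n j
  set s := ((-1 : ℝ) ^ (j - 1))
  -- what remains is `(∏_{k ≠ j} (q^j - q^k)) (1 - q^j) [n choose j]_q s e = (q;q)_n`
  field_simp
  linear_combination (z - q ^ j) * N * (-hbinom - B * (qPoch q q j * qPoch q q (n - j)) * hexp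
    - B * (qPoch q q j * qPoch q q (n - j)) * q ^ (j.choose 2 + j * (n - j)) * e * hsign
    - B * s * e * hnode)

end QNodes

theorem cor32b_general (q z x : ℝ) (n l : ℕ) (hl : 0 < l) (hq : q ≠ 0) (hz : z ≠ 0)
    (hden1 : ∀ j : ℕ, 1 ≤ j → 1 - q ^ j ≠ 0)
    (hden2 : ∀ j : ℕ, 1 ≤ j → z - q ^ j ≠ 0) :
    (∑ i ∈ Finset.Icc 1 n,
        (1 - x ^ i) * qPoch q (z⁻¹ * q) (i - 1) * z ^ (i - 1) / qPoch q q i *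
          hPoly (varList (fun j => 1 / (z - q ^ j)) i n) (l - 1)) =
      z ^ n * qPoch q (z⁻¹ * q) n / qPoch q q n *
        ∑ i ∈ Finset.Icc 1 n,
          qBinom q n i * (-1) ^ (i - 1) * q ^ (((i * (i + 1) / 2 : ℕ) : ℤ) - (n : ℤ) * i) *
            qPoch q x i / (z - q ^ i) ^ l := by
  obtain ⟨l, rfl⟩ : ∃ l', l = l' + 1 := ⟨l - 1, by omega⟩
  have hinj := pow_injective_of_abs_ne_one hq (abs_ne_one_of_one_sub_pow_ne_zero hden1)
  let c : ℕ → ℝ := fun i => (1 - x ^ i) * qPoch q (z⁻¹ * q) (i - 1) * z ^ (i - 1) / qPoch q q i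
  let w : ℕ → ℕ → ℝ := fun i j => (Lagrange.basis (Icc i n) (q ^ ·) j).eval z
  calc _ = ∑ i ∈ Icc 1 n, ∑ j ∈ Icc i n, c i * ((1 / (z - q ^ j)) ^ l * w i j) := by
        refine sum_congr rfl fun i hi => ?_
        have hi := mem_Icc.mp hi
        rw [Nat.add_sub_cancel, hPoly_varList_eq_sum_eval_basis (v := (q ^ ·)) hi.2
          hinj.injOn (fun k hk => sub_ne_zero.mp (hden2 k (hi.1.trans (mem_Icc.mp hk).1))),
          mul_sum]
    _ = ∑ j ∈ Icc 1 n, (1 / (z - q ^ j)) ^ l * ∑ i ∈ Icc 1 j, c i * w i j := by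
        rw [sum_comm' (t' := Icc 1 n) (s' := fun j => Icc 1 j)
          (by intros; simp only [mem_Icc]; omega)]
        simp only [mul_sum, mul_left_comm]
    _ = _ := by
        rw [mul_sum]
        refine sum_congr rfl fun j hj => ?_
        have hj := mem_Icc.mp hj
        have hzj := hden2 j hj.1
        have hqj := hden1 j hj.1
        have hQn := qPoch_self_ne_zero hden1 n
        have h := sub_pow_mul_eval_basis_div hq hden1 hz hj.1 hj.2
        rw [sum_Icc_mul_eval_basis hq hden1 x hz hj.1 hj.2, one_div_pow]
        field_simp at h ⊢
        linear_combination (qPoch q x j * (z - q ^ j) ^ l) * h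

/-- Corollary 3.2(b). -/
theorem cor32b (q z x : ℝ) (n l : ℕ) (hn : 0 < n) (hl : 0 < l) (hq : q ≠ 0) (hz : z ≠ 0)
    (hden1 : ∀ j : ℕ, 1 ≤ j → 1 - q ^ j ≠ 0)
    (hden2 : ∀ j : ℕ, 1 ≤ j → z - q ^ j ≠ 0)
    (hden3 : ∀ j : ℕ, 1 ≤ j → 1 - z⁻¹ * q ^ j ≠ 0) :
    (∑ i ∈ Finset.Icc 1 n,
        (1 - x ^ i) * qPoch q (z⁻¹ * q) (i - 1) * z ^ (i - 1) / qPoch q q i *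
          hPoly (varList (fun j => 1 / (z - q ^ j)) i n) (l - 1)) =
      z ^ n * qPoch q (z⁻¹ * q) n / qPoch q q n *
        ∑ i ∈ Finset.Icc 1 n,
          qBinom q n i * (-1) ^ (i - 1) * q ^ (((i * (i + 1) / 2 : ℕ) : ℤ) - (n : ℤ) * i) *
            qPoch q x i / (z - q ^ i) ^ l :=
  cor32b_general q z x n l hl hq hz hden1 hden2
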